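/- arXiv:2008.12705 — 3 statements merged into one kernel-verified Lean document; each statement's English description precedes it below -/
import Mathlib

section
/- Let T ∈ B(H) and let α, β > 0. Then ‖T‖_{α,β} = √(α+4β) · w(T) if and only if T = 0. -/
/-!
Write `T = A + iB` with `A = ℜ T`, `B = ℑ T` self-adjoint. Their quadratic forms are the real and
imaginary parts of `⟨Tx, x⟩`, so `‖A‖, ‖B‖ ≤ w(T)`. For a unit vector `x` the parallelogram law
gives `‖Tx‖² + ‖T*x‖² = 2 (‖Ax‖² + ‖Bx‖²) ≤ 4 w(T)²`, and `|⟨Tx, x⟩| ≤ ‖T*x‖`, hence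
`|⟨Tx, x⟩|² + ‖Tx‖² ≤ 4 w(T)²`. Combined with `|⟨Tx, x⟩| ≤ w(T)` this bounds
`‖T‖_{α,β}²` by `max (α + 3β, 4β) · w(T)²`, which is strictly below `(α + 4β) w(T)²` unless
`w(T) = 0`, i.e. `T = 0`.
-/

open ContinuousLinearMap

variable {H : Type*} [NormedAddCommGroup H] [InnerProductSpace ℂ H] [CompleteSpace H]

/-- The numerical radius `w(T) = sup {|⟨Tx,x⟩| : ‖x‖ = 1}`. -/
noncomputable def numRad (T : H →L[ℂ] H) : ℝ :=
  sSup {r : ℝ | ∃ x : H, ‖x‖ = 1 ∧ r = ‖(inner ℂ (T x) x : ℂ)‖}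

/-- The `(α,β)`-norm `‖T‖_{α,β} = sup {√(α|⟨Tx,x⟩|² + β‖Tx‖²) : ‖x‖ = 1}`. -/
noncomputable def abNorm (α β : ℝ) (T : H →L[ℂ] H) : ℝ :=
  sSup {r : ℝ | ∃ x : H, ‖x‖ = 1 ∧
    r = Real.sqrt (α * ‖(inner ℂ (T x) x : ℂ)‖ ^ 2 + β * ‖T x‖ ^ 2)}

open scoped InnerProductSpace ComplexStarModule ComplexConjugate

theorem mul_sq_add_mul_sq_le_max_mul_sq {α β p t w : ℝ} (hβ : 0 ≤ β) (hp : 0 ≤ p) (hpw : p ≤ w)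
    (hpt : p ^ 2 + t ^ 2 ≤ 4 * w ^ 2) :
    α * p ^ 2 + β * t ^ 2 ≤ max (α + 3 * β) (4 * β) * w ^ 2 := by
  have hp2 : p ^ 2 ≤ w ^ 2 := by gcongr
  rcases le_total β α with hαβ | hαβ
  · nlinarith [le_max_left (α + 3 * β) (4 * β)]
  · nlinarith [le_max_right (α + 3 * β) (4 * β)]

namespace ContinuousLinearMap

section RCLike

variable {𝕜 E : Type*} [RCLike 𝕜] [NormedAddCommGroup E] [InnerProductSpace 𝕜 E]

theorem norm_inner_apply_self_le_mul_sq (T : E →L[𝕜] E) {w : ℝ}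
    (hw : ∀ x, ‖x‖ = 1 → ‖⟪T x, x⟫_𝕜‖ ≤ w) (x : E) : ‖⟪T x, x⟫_𝕜‖ ≤ w * ‖x‖ ^ 2 := by
  rcases eq_or_ne x 0 with rfl | hx
  · simp
  have hu := hw _ (norm_smul_inv_norm (𝕜 := 𝕜) hx)
  rw [map_smul, inner_smul_left, inner_smul_right, norm_mul, norm_mul, RCLike.norm_conj,
    norm_inv, RCLike.norm_ofReal, abs_norm, ← mul_assoc, ← sq, inv_pow,
    inv_mul_le_iff₀ (by positivity)] at hu
  linarith

theorem norm_le_of_abs_re_inner_le {S : E →L[𝕜] E} (hS : (S : E →ₗ[𝕜] E).IsSymmetric) {w : ℝ}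
    (hw : 0 ≤ w) (h : ∀ x, |RCLike.re ⟪S x, x⟫_𝕜| ≤ w * ‖x‖ ^ 2) : ‖S‖ ≤ w := by
  rw [S.norm_eq_iSup_rayleighQuotient hS]
  refine ciSup_le fun x ↦ ?_
  rcases eq_or_ne x 0 with rfl | hx
  · simpa using hw
  rw [rayleighQuotient, reApplyInnerSelf_apply, abs_div, abs_sq, div_le_iff₀ (by positivity)]
  exact h x

end RCLike

section Complex

variable {E : Type*} [NormedAddCommGroup E] [InnerProductSpace ℂ E] [CompleteSpace E]

theorem inner_adjoint_apply_self (T : E →L[ℂ] E) (x : E) :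
    ⟪adjoint T x, x⟫_ℂ = conj ⟪T x, x⟫_ℂ := by
  rw [adjoint_inner_left, inner_conj_symm]

theorem re_inner_realPart_apply_self (T : E →L[ℂ] E) (x : E) :
    (⟪(ℜ T : E →L[ℂ] E) x, x⟫_ℂ).re = (⟪T x, x⟫_ℂ).re := by
  rw [realPart_apply_coe, star_eq_adjoint, smul_apply, add_apply, ← Complex.coe_smul,
    inner_smul_left, inner_add_left, inner_adjoint_apply_self, Complex.add_conj]
  simp

/-- The sign comes from `⟪·, ·⟫_ℂ` being conjugate-linear in its first argument. -/
theorem re_inner_imaginaryPart_apply_self (T : E →L[ℂ] E) (x : E) :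
    (⟪(ℑ T : E →L[ℂ] E) x, x⟫_ℂ).re = -(⟪T x, x⟫_ℂ).im := by
  rw [imaginaryPart_apply_coe, star_eq_adjoint, smul_apply, smul_apply, sub_apply,
    ← Complex.coe_smul, inner_smul_left, inner_smul_left, inner_sub_left,
    inner_adjoint_apply_self, Complex.sub_conj]
  simp

theorem norm_realPart_le {T : E →L[ℂ] E} {w : ℝ} (hw0 : 0 ≤ w)
    (hw : ∀ x, ‖⟪T x, x⟫_ℂ‖ ≤ w * ‖x‖ ^ 2) : ‖(ℜ T : E →L[ℂ] E)‖ ≤ w :=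
  norm_le_of_abs_re_inner_le (ℜ T).2.isSymmetric hw0 fun x ↦ by
    rw [RCLike.re_to_complex, re_inner_realPart_apply_self]
    exact (Complex.abs_re_le_norm _).trans (hw x)

theorem norm_imaginaryPart_le {T : E →L[ℂ] E} {w : ℝ} (hw0 : 0 ≤ w)
    (hw : ∀ x, ‖⟪T x, x⟫_ℂ‖ ≤ w * ‖x‖ ^ 2) : ‖(ℑ T : E →L[ℂ] E)‖ ≤ w :=
  norm_le_of_abs_re_inner_le (ℑ T).2.isSymmetric hw0 fun x ↦ by
    rw [RCLike.re_to_complex, re_inner_imaginaryPart_apply_self, abs_neg]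
    exact (Complex.abs_im_le_norm _).trans (hw x)

theorem norm_sq_apply_add_norm_sq_adjoint_apply (T : E →L[ℂ] E) (x : E) :
    ‖T x‖ ^ 2 + ‖adjoint T x‖ ^ 2 =
      2 * (‖(ℜ T : E →L[ℂ] E) x‖ ^ 2 + ‖(ℑ T : E →L[ℂ] E) x‖ ^ 2) := by
  set A : E →L[ℂ] E := ↑(ℜ T)
  set B : E →L[ℂ] E := ↑(ℑ T)
  have hT : T = A + Complex.I • B := (realPart_add_I_smul_imaginaryPart T).symm
  have hT' : adjoint T = A - Complex.I • B := by
    rw [← star_eq_adjoint, hT, star_add, star_smul, (ℜ T).2.star_eq, (ℑ T).2.star_eq,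
      Complex.star_def, Complex.conj_I, neg_smul, sub_eq_add_neg]
  have hIB : ‖Complex.I • B x‖ = ‖B x‖ := by rw [norm_smul, Complex.norm_I, one_mul]
  rw [hT', hT]
  simpa only [add_apply, sub_apply, smul_apply, hIB] using
    parallelogram_law_with_norm ℂ (A x) (Complex.I • B x)

theorem norm_inner_apply_self_sq_add_norm_apply_sq_le {T : E →L[ℂ] E} {w : ℝ} (hw0 : 0 ≤ w)
    (hw : ∀ x, ‖⟪T x, x⟫_ℂ‖ ≤ w * ‖x‖ ^ 2) {x : E} (hx : ‖x‖ = 1) :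
    ‖⟪T x, x⟫_ℂ‖ ^ 2 + ‖T x‖ ^ 2 ≤ 4 * w ^ 2 := by
  have hinner : ‖⟪T x, x⟫_ℂ‖ ≤ ‖adjoint T x‖ := by
    calc ‖⟪T x, x⟫_ℂ‖ = ‖⟪adjoint T x, x⟫_ℂ‖ := by rw [inner_adjoint_apply_self, Complex.norm_conj]
      _ ≤ ‖adjoint T x‖ := by simpa [hx] using norm_inner_le_norm (adjoint T x) x
  have hA : ‖(ℜ T : E →L[ℂ] E) x‖ ≤ w := by
    simpa [hx] using le_of_opNorm_le _ (norm_realPart_le hw0 hw) x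
  have hB : ‖(ℑ T : E →L[ℂ] E) x‖ ≤ w := by
    simpa [hx] using le_of_opNorm_le _ (norm_imaginaryPart_le hw0 hw) x
  calc ‖⟪T x, x⟫_ℂ‖ ^ 2 + ‖T x‖ ^ 2 ≤ ‖T x‖ ^ 2 + ‖adjoint T x‖ ^ 2 := by
        rw [add_comm]; gcongr
    _ = 2 * (‖(ℜ T : E →L[ℂ] E) x‖ ^ 2 + ‖(ℑ T : E →L[ℂ] E) x‖ ^ 2) :=
        norm_sq_apply_add_norm_sq_adjoint_apply T x
    _ ≤ 2 * (w ^ 2 + w ^ 2) := by gcongr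
    _ = 4 * w ^ 2 := by ring

end Complex

end ContinuousLinearMap

section NumericalRadius

variable {E : Type*} [NormedAddCommGroup E] [InnerProductSpace ℂ E]

theorem norm_inner_apply_self_le_numRad (T : E →L[ℂ] E) {x : E} (hx : ‖x‖ = 1) :
    ‖⟪T x, x⟫_ℂ‖ ≤ numRad T := by
  refine le_csSup ⟨‖T‖, ?_⟩ ⟨x, hx, rfl⟩
  rintro _ ⟨y, hy, rfl⟩
  simpa [hy] using (norm_inner_le_norm (T y) y).trans
    (mul_le_mul_of_nonneg_right (T.le_opNorm y) (norm_nonneg y))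

theorem norm_inner_apply_self_le_numRad_mul_sq (T : E →L[ℂ] E) (x : E) :
    ‖⟪T x, x⟫_ℂ‖ ≤ numRad T * ‖x‖ ^ 2 :=
  T.norm_inner_apply_self_le_mul_sq (fun _ hx ↦ norm_inner_apply_self_le_numRad T hx) x

theorem numRad_nonneg (T : E →L[ℂ] E) : 0 ≤ numRad T :=
  Real.sSup_nonneg <| by rintro _ ⟨x, -, rfl⟩; exact norm_nonneg _

theorem numRad_eq_zero_iff {T : E →L[ℂ] E} : numRad T = 0 ↔ T = 0 := by
  refine ⟨fun h ↦ ?_, ?_⟩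
  · have hT : ∀ x, ⟪T x, x⟫_ℂ = 0 := fun x ↦ norm_le_zero_iff.mp <| by
      simpa [h] using norm_inner_apply_self_le_numRad_mul_sq T x
    exact coe_injective ((inner_map_self_eq_zero (T : E →ₗ[ℂ] E)).mp hT)
  · rintro rfl
    exact (Real.sSup_nonpos <| by rintro _ ⟨x, -, rfl⟩; simp).antisymm (numRad_nonneg 0)

theorem abNorm_zero (α β : ℝ) : abNorm α β (0 : E →L[ℂ] E) = 0 :=
  (Real.sSup_nonpos <| by rintro _ ⟨x, -, rfl⟩; simp).antisymm
    (Real.sSup_nonneg <| by rintro _ ⟨x, -, rfl⟩; exact Real.sqrt_nonneg _)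

theorem abNorm_le_sqrt_max_mul_numRad [CompleteSpace E] (T : E →L[ℂ] E) (α : ℝ) {β : ℝ}
    (hβ : 0 ≤ β) :
    abNorm α β T ≤ √(max (α + 3 * β) (4 * β)) * numRad T := by
  have hw0 := numRad_nonneg T
  refine Real.sSup_le ?_ (by positivity)
  rintro _ ⟨x, hx, rfl⟩
  rw [← Real.sqrt_sq hw0, ← Real.sqrt_mul (by positivity)]
  exact Real.sqrt_le_sqrt <| mul_sq_add_mul_sq_le_max_mul_sq hβ (norm_nonneg _)
    (norm_inner_apply_self_le_numRad T hx) (norm_inner_apply_self_sq_add_norm_apply_sq_le hw0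
      (norm_inner_apply_self_le_numRad_mul_sq T) hx)

end NumericalRadius

/-- For `α, β > 0`, `‖T‖_{α,β} = √(α+4β)·w(T)` iff `T = 0`. -/
theorem abNorm_eq_sqrt_mul_numRad_iff (T : H →L[ℂ] H) (α β : ℝ) (hα : 0 < α) (hβ : 0 < β) :
    abNorm α β T = Real.sqrt (α + 4 * β) * numRad T ↔ T = 0 := by
  refine ⟨fun h ↦ ?_, ?_⟩
  · by_contra hT
    have hw : 0 < numRad T := (numRad_nonneg T).lt_of_ne' (numRad_eq_zero_iff.not.mpr hT)
    have hK : √(max (α + 3 * β) (4 * β)) < √(α + 4 * β) :=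
      Real.sqrt_lt_sqrt (by positivity) (max_lt (by linarith) (by linarith))
    have := abNorm_le_sqrt_max_mul_numRad T α hβ.le
    rw [h] at this
    exact (mul_lt_mul_of_pos_right hK hw).not_ge this
  · rintro rfl
    rw [abNorm_zero, numRad_eq_zero_iff.mpr rfl, mul_zero]
end

section
/- The (α,β)-norm is preserved under the adjoint operation: for every T in B(H) and all real α, β ≥ 0 with (α,β) ≠ (0,0), ‖T*‖_{α,β} = ‖T‖_{α,β}. -/
/-!
For a unit vector `x` and any `s : ℂ`, completing the square gives
`α |⟨Tx, x⟩|² + β ‖Tx‖² + αβ(α + β) |s|² = β ‖(T + αs) x‖² + α |⟨Tx, x⟩ - β s̄|²`.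
Dropping the last term and taking the supremum over `x` bounds `β ‖T + αs‖²` by
`‖T‖²_{α,β} + αβ(α + β) |s|²`. For `T*` at a fixed `x`, the choice `β s̄ = ⟨T*x, x⟩` makes the last
term vanish, and `‖T* + αs‖ = ‖T + α s̄‖` then yields `‖T*‖_{α,β} ≤ ‖T‖_{α,β}`. When `β = 0` only
`|⟨T*x, x⟩| = |⟨Tx, x⟩|` is needed.
-/

open ContinuousLinearMap

variable {H : Type*} [NormedAddCommGroup H] [InnerProductSpace ℂ H] [CompleteSpace H]

open scoped InnerProductSpace ComplexConjugate

section

variable {E : Type*} [NormedAddCommGroup E] [InnerProductSpace ℂ E]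

noncomputable def abForm (α β : ℝ) (T : E →L[ℂ] E) (x : E) : ℝ :=
  α * ‖⟪T x, x⟫_ℂ‖ ^ 2 + β * ‖T x‖ ^ 2

variable {α β : ℝ} {T : E →L[ℂ] E}

lemma abForm_le_of_norm_eq_one (hα : 0 ≤ α) (hβ : 0 ≤ β) {x : E} (hx : ‖x‖ = 1) :
    abForm α β T x ≤ (α + β) * ‖T‖ ^ 2 := by
  have hTx : ‖T x‖ ≤ ‖T‖ := by simpa [hx] using T.le_opNorm x
  have hinner : ‖⟪T x, x⟫_ℂ‖ ≤ ‖T‖ :=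
    (norm_inner_le_norm _ _).trans (by rw [hx, mul_one]; exact hTx)
  unfold abForm
  have := pow_le_pow_left₀ (norm_nonneg _) hTx 2
  have := pow_le_pow_left₀ (norm_nonneg _) hinner 2
  nlinarith

lemma abNorm_nonneg (α β : ℝ) (T : E →L[ℂ] E) : 0 ≤ abNorm α β T :=
  Real.sSup_nonneg fun _ ⟨_, _, hr⟩ => hr ▸ Real.sqrt_nonneg _

lemma abForm_le_abNorm_sq (hα : 0 ≤ α) (hβ : 0 ≤ β) {x : E} (hx : ‖x‖ = 1) :
    abForm α β T x ≤ abNorm α β T ^ 2 := by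
  have hbdd : BddAbove {r : ℝ | ∃ y : E, ‖y‖ = 1 ∧ r = √(abForm α β T y)} :=
    ⟨√((α + β) * ‖T‖ ^ 2), fun _ ⟨y, hy, hr⟩ =>
      hr ▸ Real.sqrt_le_sqrt (abForm_le_of_norm_eq_one hα hβ hy)⟩
  rw [← Real.sqrt_le_left (abNorm_nonneg α β T)]
  exact le_csSup hbdd ⟨x, hx, rfl⟩

lemma abNorm_le_of_abForm_le {N : ℝ} (hN : 0 ≤ N)
    (h : ∀ x : E, ‖x‖ = 1 → abForm α β T x ≤ N ^ 2) : abNorm α β T ≤ N :=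
  Real.sSup_le (fun _ ⟨x, hx, hr⟩ => hr ▸ Real.sqrt_le_iff.mpr ⟨hN, h x hx⟩) hN

lemma abForm_add_eq (α β : ℝ) (T : E →L[ℂ] E) (s : ℂ) {x : E} (hx : ‖x‖ = 1) :
    abForm α β T x + α * β * (α + β) * ‖s‖ ^ 2
      = β * ‖(T + (α * s) • 1) x‖ ^ 2 + α * ‖⟪T x, x⟫_ℂ - β * conj s‖ ^ 2 := by
  have hshift : ‖(T + (α * s) • 1) x‖ ^ 2
      = ‖T x‖ ^ 2 + 2 * (α * s * ⟪T x, x⟫_ℂ).re + α ^ 2 * ‖s‖ ^ 2 := by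
    rw [add_apply, smul_apply, one_apply_eq_self, norm_add_sq (𝕜 := ℂ), inner_smul_right,
      norm_smul, hx, norm_mul, Complex.norm_real, Real.norm_eq_abs, mul_one, mul_pow, sq_abs,
      RCLike.re_to_complex]
  rw [abForm, hshift]
  simp only [Complex.sq_norm, Complex.normSq_apply, Complex.mul_re, Complex.mul_im, Complex.sub_re,
    Complex.sub_im, Complex.ofReal_re, Complex.ofReal_im, Complex.conj_re, Complex.conj_im]
  ring

lemma mul_norm_add_smul_one_sq_le (hα : 0 ≤ α) (hβ : 0 < β) (s : ℂ) :
    β * ‖T + (α * s) • 1‖ ^ 2 ≤ abNorm α β T ^ 2 + α * β * (α + β) * ‖s‖ ^ 2 := by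
  set C := abNorm α β T ^ 2 + α * β * (α + β) * ‖s‖ ^ 2
  have hC : 0 ≤ C / β := by positivity
  have hunit (y : E) (hy : ‖y‖ = 1) : ‖(T + (α * s) • 1) y‖ ≤ √(C / β) := by
    rw [Real.le_sqrt (norm_nonneg _) hC, le_div_iff₀ hβ]
    have hsq := abForm_add_eq α β T s hy
    have hN := abForm_le_abNorm_sq (T := T) hα hβ.le hy
    have hdefect : 0 ≤ α * ‖⟪T y, y⟫_ℂ - β * conj s‖ ^ 2 := by positivity
    linarith
  calc β * ‖T + (α * s) • 1‖ ^ 2 ≤ β * (C / β) := by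
        gcongr
        exact (Real.le_sqrt (norm_nonneg _) hC).mp
          (opNorm_le_of_unit_norm (Real.sqrt_nonneg _) hunit)
    _ = C := mul_div_cancel₀ C hβ.ne'

lemma abNorm_adjoint_le [CompleteSpace E] (hα : 0 ≤ α) (hβ : 0 ≤ β) :
    abNorm α β (adjoint T) ≤ abNorm α β T := by
  refine abNorm_le_of_abForm_le (abNorm_nonneg α β T) fun x hx => ?_
  have hinner : ⟪adjoint T x, x⟫_ℂ = conj ⟪T x, x⟫_ℂ := by
    rw [adjoint_inner_left, inner_conj_symm]
  rcases hβ.eq_or_lt with rfl | hβpos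
  · have hform : abForm α 0 (adjoint T) x = abForm α 0 T x := by
      simp only [abForm, hinner, Complex.norm_conj, zero_mul]
    exact hform ▸ abForm_le_abNorm_sq hα le_rfl hx
  set s := ⟪T x, x⟫_ℂ / β
  have hdefect : ⟪adjoint T x, x⟫_ℂ - β * conj s = 0 := by
    rw [hinner, map_div₀, Complex.conj_ofReal, mul_div_cancel₀ _ (by exact_mod_cast hβpos.ne'),
      sub_self]
  have hshift : adjoint T + (α * s) • 1 = adjoint (T + (α * conj s) • 1) := by
    simp only [map_add, map_smulₛₗ, adjoint_one, map_mul, Complex.conj_ofReal, Complex.conj_conj]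
  have hx' : ‖(adjoint T + (α * s) • 1) x‖ ≤ ‖T + (α * conj s) • 1‖ := by
    rw [hshift]
    calc _ ≤ ‖adjoint (T + (α * conj s) • 1)‖ * ‖x‖ := le_opNorm _ x
      _ = ‖T + (α * conj s) • 1‖ := by rw [LinearIsometryEquiv.norm_map, hx, mul_one]
  have hsq := abForm_add_eq α β (adjoint T) s hx
  rw [hdefect, norm_zero] at hsq
  have hT := mul_norm_add_smul_one_sq_le hα hβpos (T := T) (conj s)
  rw [Complex.norm_conj] at hT
  nlinarith [pow_le_pow_left₀ (norm_nonneg _) hx' 2]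

end

theorem abNorm_adjoint_general (T : H →L[ℂ] H) (α β : ℝ) (hα : 0 ≤ α) (hβ : 0 ≤ β) :
    abNorm α β (adjoint T) = abNorm α β T := by
  refine le_antisymm (abNorm_adjoint_le hα hβ) ?_
  simpa using abNorm_adjoint_le (T := adjoint T) hα hβ

/-- The `(α,β)`-norm is preserved under the adjoint operation. -/
theorem abNorm_adjoint (T : H →L[ℂ] H) (α β : ℝ) (hα : 0 ≤ α) (hβ : 0 ≤ β)
    (hαβ : (α, β) ≠ (0, 0)) :
    abNorm α β (adjoint T) = abNorm α β T :=
  abNorm_adjoint_general T α β hα hβ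
end

section
/- Let T ∈ B(H) and let α, β ≥ 0 with (α,β) ≠ (0,0). Then ‖T‖_{α,β}² ≤ ‖ (α/2)(T*T + TT*) + β·T*T ‖, and consequently w(T)² ≤ (1/(α+β)) · ‖ (α/2)(T*T + TT*) + β·T*T ‖. -/
/-! For a unit vector `x`, `|⟨Tx,x⟩|` is bounded both by `‖Tx‖` and by `‖T*x‖`, so
`α|⟨Tx,x⟩|² + β‖Tx‖² ≤ (α/2)(‖Tx‖² + ‖T*x‖²) + β‖Tx‖² = ⟨Sx,x⟩ ≤ ‖S‖` for
`S = (α/2)(T*T + TT*) + βT*T`. Since also `|⟨Tx,x⟩| ≤ ‖Tx‖`, the left side dominates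
`(α+β)|⟨Tx,x⟩|²`, which gives the bound on `w(T)`. -/

open ContinuousLinearMap

variable {H : Type*} [NormedAddCommGroup H] [InnerProductSpace ℂ H] [CompleteSpace H]

theorem Real.sSup_sq_le {s : Set ℝ} {c : ℝ} (hc : 0 ≤ c) (hs : ∀ r ∈ s, 0 ≤ r ∧ r ^ 2 ≤ c) :
    sSup s ^ 2 ≤ c := by
  have hle : sSup s ≤ √c :=
    Real.sSup_le (fun r hr => Real.le_sqrt_of_sq_le (hs r hr).2) (Real.sqrt_nonneg c)
  have hnonneg : 0 ≤ sSup s := Real.sSup_nonneg fun r hr => (hs r hr).1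
  calc sSup s ^ 2 ≤ √c ^ 2 := by gcongr
    _ = c := Real.sq_sqrt hc

section

variable {E : Type*} [NormedAddCommGroup E] [InnerProductSpace ℂ E]

theorem abNorm_sq_le_of_forall {α β c : ℝ} {T : E →L[ℂ] E} (hc : 0 ≤ c)
    (h : ∀ x : E, ‖x‖ = 1 → α * ‖(inner ℂ (T x) x : ℂ)‖ ^ 2 + β * ‖T x‖ ^ 2 ≤ c) :
    abNorm α β T ^ 2 ≤ c := by
  refine Real.sSup_sq_le hc ?_
  rintro r ⟨x, hx, rfl⟩
  exact ⟨Real.sqrt_nonneg _, Real.sq_sqrt'.trans_le (max_le (h x hx) hc)⟩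

theorem numRad_sq_le_of_forall {c : ℝ} {T : E →L[ℂ] E} (hc : 0 ≤ c)
    (h : ∀ x : E, ‖x‖ = 1 → ‖(inner ℂ (T x) x : ℂ)‖ ^ 2 ≤ c) :
    numRad T ^ 2 ≤ c := by
  refine Real.sSup_sq_le hc ?_
  rintro r ⟨x, hx, rfl⟩
  exact ⟨norm_nonneg _, h x hx⟩

theorem norm_inner_apply_self_le (T : E →L[ℂ] E) {x : E} (hx : ‖x‖ = 1) :
    ‖(inner ℂ (T x) x : ℂ)‖ ≤ ‖T x‖ := by
  simpa [hx] using norm_inner_le_norm (𝕜 := ℂ) (T x) x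

theorem re_inner_apply_self_le_opNorm (S : E →L[ℂ] E) {x : E} (hx : ‖x‖ = 1) :
    RCLike.re (inner ℂ (S x) x) ≤ ‖S‖ :=
  calc RCLike.re (inner ℂ (S x) x) ≤ ‖S x‖ * ‖x‖ := re_inner_le_norm _ _
    _ ≤ ‖S‖ * ‖x‖ * ‖x‖ := by gcongr; exact S.le_opNorm x
    _ = ‖S‖ := by rw [hx, mul_one, mul_one]

end

theorem sq_norm_inner_apply_self_le (T : H →L[ℂ] H) {x : H} (hx : ‖x‖ = 1) :
    ‖(inner ℂ (T x) x : ℂ)‖ ^ 2 ≤ (‖T x‖ ^ 2 + ‖adjoint T x‖ ^ 2) / 2 := by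
  have hT := norm_inner_apply_self_le T hx
  have hT' : ‖(inner ℂ (T x) x : ℂ)‖ ≤ ‖adjoint T x‖ := by
    simpa [hx, adjoint_inner_right] using norm_inner_le_norm (𝕜 := ℂ) x (adjoint T x)
  have := norm_nonneg (inner ℂ (T x) x)
  nlinarith

noncomputable def abOp (α β : ℝ) (T : H →L[ℂ] H) : H →L[ℂ] H :=
  ((α / 2 : ℝ) : ℂ) • (adjoint T * T + T * adjoint T) + ((β : ℝ) : ℂ) • (adjoint T * T)

theorem re_inner_abOp_apply_self (α β : ℝ) (T : H →L[ℂ] H) (x : H) :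
    RCLike.re (inner ℂ (abOp α β T x) x) =
      α / 2 * (‖T x‖ ^ 2 + ‖adjoint T x‖ ^ 2) + β * ‖T x‖ ^ 2 := by
  have hTT := apply_norm_sq_eq_inner_adjoint_left T x
  have hTT' := apply_norm_sq_eq_inner_adjoint_left (adjoint T) x
  rw [adjoint_adjoint] at hTT'
  simp only [abOp, add_apply, smul_apply, inner_add_left, inner_smul_left,
    Complex.conj_ofReal]
  rw [hTT, hTT', ← mul_def, ← mul_def]
  simp only [RCLike.re_to_complex, Complex.re_ofReal_mul, Complex.add_re]

theorem abForm_le_norm_abOp {α : ℝ} (hα : 0 ≤ α) (β : ℝ) (T : H →L[ℂ] H) {x : H} (hx : ‖x‖ = 1) :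
    α * ‖(inner ℂ (T x) x : ℂ)‖ ^ 2 + β * ‖T x‖ ^ 2 ≤ ‖abOp α β T‖ :=
  calc α * ‖(inner ℂ (T x) x : ℂ)‖ ^ 2 + β * ‖T x‖ ^ 2
      ≤ α / 2 * (‖T x‖ ^ 2 + ‖adjoint T x‖ ^ 2) + β * ‖T x‖ ^ 2 := by
        nlinarith [mul_le_mul_of_nonneg_left (sq_norm_inner_apply_self_le T hx) hα]
    _ = RCLike.re (inner ℂ (abOp α β T x) x) := (re_inner_abOp_apply_self α β T x).symm
    _ ≤ ‖abOp α β T‖ := re_inner_apply_self_le_opNorm _ hx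

/-- `‖T‖²_{α,β} ≤ ‖(α/2)(T*T + TT*) + βT*T‖`, hence
`w(T)² ≤ (1/(α+β))·‖(α/2)(T*T + TT*) + βT*T‖`. -/
theorem abNorm_sq_le (T : H →L[ℂ] H) (α β : ℝ) (hα : 0 ≤ α) (hβ : 0 ≤ β)
    (hαβ : (α, β) ≠ (0, 0)) :
    abNorm α β T ^ 2 ≤ ‖((α / 2 : ℝ) : ℂ) • (adjoint T * T + T * adjoint T) +
        ((β : ℝ) : ℂ) • (adjoint T * T)‖ ∧
      numRad T ^ 2 ≤ (1 / (α + β)) *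
        ‖((α / 2 : ℝ) : ℂ) • (adjoint T * T + T * adjoint T) +
          ((β : ℝ) : ℂ) • (adjoint T * T)‖ := by
  have hpos : 0 < α + β := by
    by_contra! h
    exact hαβ (Prod.ext (by linarith) (by linarith))
  have hbound := fun x (hx : ‖x‖ = 1) => abForm_le_norm_abOp hα β T hx
  refine ⟨abNorm_sq_le_of_forall (norm_nonneg _) hbound,
    numRad_sq_le_of_forall (by positivity) fun x hx => ?_⟩
  have hTx := norm_inner_apply_self_le T hx
  rw [one_div_mul_eq_div, le_div_iff₀' hpos]
  calc (α + β) * ‖(inner ℂ (T x) x : ℂ)‖ ^ 2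
      ≤ α * ‖(inner ℂ (T x) x : ℂ)‖ ^ 2 + β * ‖T x‖ ^ 2 := by
        rw [add_mul]; gcongr
    _ ≤ _ := hbound x hx
end
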